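/- Let n, N ∈ ℕ, let w ∈ ℝ^{n×N} be a weight matrix, and let μ^1,…,μ^N ∈ ℝⁿ be center vectors that are totally ordered with respect to the componentwise order on ℝⁿ (for every pair k, l, either μ^k_i ≤ μ^l_i for all i, or μ^l_i ≤ μ^k_i for all i). Fix l ∈ {1,…,N} and x ∈ ℝⁿ with x_i ≠ μ^k_i for all i ∈ {1,…,n} and all k ∈ {1,…,N}. Define, for each pair (l,k), v_max(l,k) ∈ ℝⁿ by v_max(l,k)_i = max{μ^l_i, μ^k_i}. Then the total approximation error Σ_{i=1}^n Σ_{k=1}^N α · (1 − λ_{α,μ^l_i}(x_i)) · w_{ik} · (Λ^α_{μ^l}(x) · Λ^α_{μ^k}(x) − Λ^α_{v_max(l,k)}(x)) converges to 0 as α → ∞. -/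

import Mathlib

open Filter Topology

/-!
Because the centers are ordered, `Λ_{v_max(l,k)}` is one of `Λ_{μˡ}`, `Λ_{μᵏ}`, so the bracket
`Λ_{μˡ} Λ_{μᵏ} - Λ_{v_max}` equals `-Λ_{v_max} (1 - Λ_other)` and is bounded by `Λ_{v_max}`.
If `x_i > μˡ_i` the factor `1 - λ_{μˡ_i}(x_i)` is at most `exp (-α |x_i - μˡ_i|)`; if `x_i < μˡ_i`
the same bound holds for `Λ_{v_max}(x) ≤ λ_{μˡ_i}(x_i)`. Either way every summand is
`O(α exp (-α |x_i - μˡ_i|))`, which tends to `0`.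
-/

/-- The logistic function with steepness `α` and center `μ`. -/
noncomputable def logistic (α μ x : ℝ) : ℝ := 1 / (1 + Real.exp (-α * (x - μ)))

/-- The multivariate conjunctive logistic function with center vector `v`. -/
noncomputable def mvLogistic {n : ℕ} (α : ℝ) (v x : Fin n → ℝ) : ℝ :=
  ∏ i, logistic α (v i) (x i)

lemma Real.sigmoid_le_exp (x : ℝ) : Real.sigmoid x ≤ Real.exp x :=
  calc Real.sigmoid x = Real.sigmoid x * Real.exp (-x) * Real.exp x := by
        rw [mul_assoc, ← Real.exp_add, neg_add_cancel, Real.exp_zero, mul_one]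
    _ = Real.sigmoid (-x) * Real.exp x := by rw [Real.sigmoid_mul_rexp_neg]
    _ ≤ Real.exp x := mul_le_of_le_one_left (Real.exp_pos x).le (Real.sigmoid_le_one _)

section logistic

variable (α μ x : ℝ)

lemma logistic_eq_sigmoid : logistic α μ x = Real.sigmoid (α * (x - μ)) := by
  rw [logistic, Real.sigmoid_def, one_div, neg_mul]

lemma logistic_pos : 0 < logistic α μ x := by
  rw [logistic_eq_sigmoid]; exact Real.sigmoid_pos _

lemma logistic_le_one : logistic α μ x ≤ 1 := by
  rw [logistic_eq_sigmoid]; exact Real.sigmoid_le_one _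

lemma logistic_le_exp : logistic α μ x ≤ Real.exp (α * (x - μ)) := by
  rw [logistic_eq_sigmoid]; exact Real.sigmoid_le_exp _

lemma one_sub_logistic_le_exp : 1 - logistic α μ x ≤ Real.exp (-(α * (x - μ))) := by
  rw [logistic_eq_sigmoid, ← Real.sigmoid_neg]; exact Real.sigmoid_le_exp _

lemma logistic_antitone_center {α : ℝ} (hα : 0 ≤ α) (x : ℝ) :
    Antitone fun μ => logistic α μ x := fun a b hab => by
  simp only [logistic_eq_sigmoid]
  exact Real.sigmoid_le (mul_le_mul_of_nonneg_left (by linarith) hα)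

end logistic

section mvLogistic

variable {n : ℕ} (α : ℝ) (u v x : Fin n → ℝ)

lemma mvLogistic_nonneg : 0 ≤ mvLogistic α v x :=
  Finset.prod_nonneg fun i _ => (logistic_pos α (v i) (x i)).le

lemma mvLogistic_le_one : mvLogistic α v x ≤ 1 :=
  Finset.prod_le_one (fun i _ => (logistic_pos α (v i) (x i)).le)
    fun i _ => logistic_le_one α (v i) (x i)

lemma mvLogistic_le_logistic (i : Fin n) : mvLogistic α v x ≤ logistic α (v i) (x i) := by
  rw [mvLogistic, ← Finset.mul_prod_erase _ _ (Finset.mem_univ i)]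
  exact mul_le_of_le_one_right (logistic_pos α (v i) (x i)).le
    (Finset.prod_le_one (fun j _ => (logistic_pos α (v j) (x j)).le)
      fun j _ => logistic_le_one α (v j) (x j))

lemma abs_mvLogistic_mul_sub_mvLogistic_max_le (huv : u ≤ v ∨ v ≤ u) :
    |mvLogistic α u x * mvLogistic α v x - mvLogistic α (fun j => max (u j) (v j)) x|
      ≤ mvLogistic α (fun j => max (u j) (v j)) x := by
  have hu₀ := mvLogistic_nonneg α u x
  have hu₁ := mvLogistic_le_one α u x
  have hv₀ := mvLogistic_nonneg α v x
  have hv₁ := mvLogistic_le_one α v x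
  rcases huv with huv | huv
  · have hmax : (fun j => max (u j) (v j)) = v := funext fun j => max_eq_right (huv j)
    rw [hmax, abs_le]
    constructor <;> nlinarith
  · have hmax : (fun j => max (u j) (v j)) = u := funext fun j => max_eq_left (huv j)
    rw [hmax, abs_le]
    constructor <;> nlinarith

lemma one_sub_logistic_mul_mvLogistic_max_le {α : ℝ} (hα : 0 ≤ α) (i : Fin n) :
    (1 - logistic α (u i) (x i)) * mvLogistic α (fun j => max (u j) (v j)) x
      ≤ Real.exp (-|x i - u i| * α) := by
  have hl₀ := logistic_pos α (u i) (x i)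
  have hl₁ := logistic_le_one α (u i) (x i)
  rcases le_or_gt (u i) (x i) with hux | hxu
  · calc (1 - logistic α (u i) (x i)) * mvLogistic α (fun j => max (u j) (v j)) x
          ≤ 1 - logistic α (u i) (x i) :=
            mul_le_of_le_one_right (by linarith) (mvLogistic_le_one _ _ _)
      _ ≤ Real.exp (-(α * (x i - u i))) := one_sub_logistic_le_exp _ _ _
      _ = Real.exp (-|x i - u i| * α) := by rw [abs_of_nonneg (sub_nonneg.2 hux)]; ring_nf
  · calc (1 - logistic α (u i) (x i)) * mvLogistic α (fun j => max (u j) (v j)) x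
          ≤ mvLogistic α (fun j => max (u j) (v j)) x :=
            mul_le_of_le_one_left (mvLogistic_nonneg _ _ _) (by linarith)
      _ ≤ logistic α (max (u i) (v i)) (x i) := mvLogistic_le_logistic _ _ _ i
      _ ≤ logistic α (u i) (x i) := logistic_antitone_center hα _ (le_max_left _ _)
      _ ≤ Real.exp (α * (x i - u i)) := logistic_le_exp _ _ _
      _ = Real.exp (-|x i - u i| * α) := by rw [abs_of_neg (sub_neg.2 hxu)]; ring_nf

lemma tendsto_closure_error_zero {u v x : Fin n → ℝ} (huv : u ≤ v ∨ v ≤ u) {i : Fin n}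
    (hxu : x i ≠ u i) (W : ℝ) :
    Tendsto (fun α => α * (1 - logistic α (u i) (x i)) * W
        * (mvLogistic α u x * mvLogistic α v x - mvLogistic α (fun j => max (u j) (v j)) x))
      atTop (𝓝 0) := by
  have hδ : 0 < |x i - u i| := abs_pos.2 (sub_ne_zero.2 hxu)
  have hbound := (tendsto_rpow_mul_exp_neg_mul_atTop_nhds_zero 1 _ hδ).const_mul |W|
  rw [mul_zero] at hbound
  refine squeeze_zero_norm' ?_ hbound
  filter_upwards [eventually_ge_atTop 0] with α hα
  have hl : 0 ≤ 1 - logistic α (u i) (x i) := sub_nonneg.2 (logistic_le_one _ _ _)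
  calc _ = α * |W| * ((1 - logistic α (u i) (x i)) * |mvLogistic α u x * mvLogistic α v x
          - mvLogistic α (fun j => max (u j) (v j)) x|) := by
        rw [Real.norm_eq_abs, abs_mul, abs_mul, abs_mul, abs_of_nonneg hα, abs_of_nonneg hl]
        ring
    _ ≤ α * |W| * ((1 - logistic α (u i) (x i)) * mvLogistic α (fun j => max (u j) (v j)) x) := by
        gcongr
        exact abs_mvLogistic_mul_sub_mvLogistic_max_le α u v x huv
    _ ≤ α * |W| * Real.exp (-|x i - u i| * α) := by
        gcongr
        exact one_sub_logistic_mul_mvLogistic_max_le u v x hα i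
    _ = |W| * (α ^ (1 : ℝ) * Real.exp (-|x i - u i| * α)) := by rw [Real.rpow_one]; ring

end mvLogistic

/-- **finite approximate closure of the SILL dictionary.**
For a totally ordered (componentwise) family of centers `μ¹,…,μᴺ`, weights `w`, a fixed
dictionary index `l`, and a point `x` avoiding all center coordinates, the total error
made by replacing each product `Λ^α_{μˡ} Λ^α_{μᵏ}` with `Λ^α_{v_max(l,k)}` in the
expression for `d/dt Λ^α_{μˡ}` converges to `0` as the steepness `α → ∞`. -/
theorem sill_finite_approximate_closure {n N : ℕ} (w : Fin n → Fin N → ℝ)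
    (μ : Fin N → Fin n → ℝ)
    (horder : ∀ k l : Fin N, (∀ i, μ k i ≤ μ l i) ∨ (∀ i, μ l i ≤ μ k i))
    (l : Fin N) (x : Fin n → ℝ) (hx : ∀ (i : Fin n) (k : Fin N), x i ≠ μ k i) :
    Tendsto (fun α : ℝ =>
        ∑ i, ∑ k, α * (1 - logistic α (μ l i) (x i)) * w i k
          * (mvLogistic α (μ l) x * mvLogistic α (μ k) x
              - mvLogistic α (fun i => max (μ l i) (μ k i)) x))
      atTop (𝓝 0) := by
  have h := tendsto_finsetSum Finset.univ fun i _ => tendsto_finsetSum Finset.univ fun k _ =>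
    tendsto_closure_error_zero (horder l k) (hx i l) (w i k)
  simpa using h
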